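/- Let a < b be reals, ω a weight on [a,b], and k, k' ∈ K_ω conjugate kernels. Let f ∈ L¹([a,b];ℝ) be such that f(x) = (I_a^k φ)(x) for a.e. x ∈ [a,b] for some φ ∈ L¹([a,b];ℝ). Then I_a^{k'} f agrees a.e. with the absolutely continuous function Ψ(x) = ∫_a^x φ(y) ω(y) dy, the left-sided k'-derivative satisfies (D_a^{k'} f)(x) = φ(x) for a.e. x ∈ [a,b], and consequently I_a^k(D_a^{k'} f)(x) = f(x) for a.e. x ∈ [a,b]. -/

import Mathlib

open MeasureTheory Set

noncomputable section

/-- weight function on `[a,b]`: measurable, positive, with `ω` and `ω⁻¹` essentially bounded. -/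
def IsWeight (a b : ℝ) (ω : ℝ → ℝ) : Prop :=
  Measurable ω ∧ (∀ x ∈ Icc a b, 0 < ω x) ∧
  essSup (fun x => ENNReal.ofReal (ω x)) (volume.restrict (Icc a b)) < ⊤ ∧
  essSup (fun x => ENNReal.ofReal (ω x)⁻¹) (volume.restrict (Icc a b)) < ⊤

/-- `F_k(y) = ∫_y^b k(x,y) ω(x) dx`. -/
def Fker (b : ℝ) (ω : ℝ → ℝ) (k : ℝ → ℝ → ℝ) (y : ℝ) : ℝ :=
  ∫ x in y..b, k x y * ω x

/-- `G_k(y) = ∫_a^y k(y,x) ω(x) dx`. -/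
def Gker (a : ℝ) (ω : ℝ → ℝ) (k : ℝ → ℝ → ℝ) (y : ℝ) : ℝ :=
  ∫ x in a..y, k y x * ω x

/-- membership in the kernel class `K_ω`. -/
def MemK (a b : ℝ) (ω : ℝ → ℝ) (k : ℝ → ℝ → ℝ) : Prop :=
  Measurable (Function.uncurry k) ∧
  (∀ x y : ℝ, a ≤ y → y < x → x ≤ b → 0 < k x y) ∧
  essSup (fun y => ENNReal.ofReal (Fker b ω k y)) (volume.restrict (Ico a b)) < ⊤ ∧
  essSup (fun y => ENNReal.ofReal (Gker a ω k y)) (volume.restrict (Ioc a b)) < ⊤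

/-- `δ_{k₁,k₂}(x,y) = ∫_y^x k₁(x,z) k₂(z,y) ω(z) dz`. -/
def deltaK (ω : ℝ → ℝ) (k₁ k₂ : ℝ → ℝ → ℝ) (x y : ℝ) : ℝ :=
  ∫ z in y..x, k₁ x z * k₂ z y * ω z

/-- `k₁ R k₂` : `0 < δ_{k₁,k₂}(x,y) < ∞` on `Ω` (finiteness as interval integrability). -/
def relR (a b : ℝ) (ω : ℝ → ℝ) (k₁ k₂ : ℝ → ℝ → ℝ) : Prop :=
  ∀ x y : ℝ, a ≤ y → y < x → x ≤ b →
    0 < deltaK ω k₁ k₂ x y ∧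
    IntervalIntegrable (fun z => k₁ x z * k₂ z y * ω z) volume y x

/-- conjugate kernels. -/
def Conjugate (a b : ℝ) (ω : ℝ → ℝ) (k k' : ℝ → ℝ → ℝ) : Prop :=
  ∀ x y : ℝ, a ≤ y → y < x → x ≤ b →
    deltaK ω k k' x y = 1 ∧ deltaK ω k' k x y = 1

/-- left-sided `k`-integral. -/
def Ia (a : ℝ) (ω : ℝ → ℝ) (k : ℝ → ℝ → ℝ) (f : ℝ → ℝ) (x : ℝ) : ℝ :=
  ∫ y in a..x, k x y * f y * ω y

/-- right-sided `k`-integral. -/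
def Ib (b : ℝ) (ω : ℝ → ℝ) (k : ℝ → ℝ → ℝ) (f : ℝ → ℝ) (x : ℝ) : ℝ :=
  ∫ y in x..b, k y x * f y * ω y

open Filter Function

/-! Swapping the order of integration over the triangle `a < z < y < x` gives
`I^{k'}(I^k φ)(x) = ∫_a^x φ(z) ω(z) δ_{k',k}(x,z) dz = ∫_a^x φ ω`. Since the kernel
`k'(x,y) k(y,z) ω(y)` is nonnegative and integrates to `δ_{k',k}(x,z) = 1` in `y`, Tonelli
makes the swap legitimate for every `φ ω ∈ L¹`. The derivative claims are the Lebesgue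
differentiation theorem for `Ψ`, and the last claim substitutes `φ = ω⁻¹ Ψ'` (a.e.) into `I^k`. -/

theorem integral_integral_mul_eq_integral_of_integral_eq_one
    {α β : Type*} [MeasurableSpace α] [MeasurableSpace β] {μ : Measure α} {ν : Measure β}
    [SFinite μ] [SFinite ν] {P : α → β → ℝ} {g : β → ℝ}
    (hP : AEStronglyMeasurable (uncurry P) (μ.prod ν))
    (hP_nonneg : ∀ᵐ z ∂ν, ∀ᵐ y ∂μ, 0 ≤ P y z)
    (hP_one : ∀ᵐ z ∂ν, ∫ y, P y z ∂μ = 1) (hg : Integrable g ν) :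
    ∫ y, ∫ z, P y z * g z ∂ν ∂μ = ∫ z, g z ∂ν := by
  have hP_int : ∀ᵐ z ∂ν, Integrable (P · z) μ :=
    hP_one.mono fun z h => .of_integral_ne_zero (h ▸ one_ne_zero)
  have hPg : Integrable (uncurry fun y z => P y z * g z) (μ.prod ν) := by
    rw [integrable_prod_iff' (f := uncurry fun y z => P y z * g z)
      (hP.mul hg.aestronglyMeasurable.comp_snd)]
    refine ⟨hP_int.mono fun z h => h.mul_const (g z), hg.norm.congr ?_⟩
    filter_upwards [hP_nonneg, hP_one] with z h0 h1
    calc ‖g z‖ = (∫ y, P y z ∂μ) * ‖g z‖ := by rw [h1, one_mul]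
      _ = ∫ y, ‖P y z * g z‖ ∂μ := by
        rw [← integral_mul_const]
        refine integral_congr_ae ?_
        filter_upwards [h0] with y hy
        rw [norm_mul, Real.norm_of_nonneg hy]
  rw [integral_integral_swap hPg]
  refine integral_congr_ae ?_
  filter_upwards [hP_one] with z h1
  rw [integral_mul_const, h1, one_mul]

section

variable {a b : ℝ} {ω φ : ℝ → ℝ}

theorem IsWeight.exists_ae_norm_le (hω : IsWeight a b ω) :
    ∃ C, ∀ᵐ x ∂volume.restrict (Icc a b), ‖ω x‖ ≤ C := by
  refine ⟨(essSup (fun x => ENNReal.ofReal (ω x)) (volume.restrict (Icc a b))).toReal, ?_⟩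
  filter_upwards [ENNReal.ae_le_essSup _, ae_restrict_mem measurableSet_Icc] with x hx hxI
  rw [Real.norm_of_nonneg (hω.2.1 x hxI).le, ← ENNReal.toReal_ofReal (hω.2.1 x hxI).le]
  exact ENNReal.toReal_mono hω.2.2.1.ne hx

theorem IsWeight.integrableOn_mul (hω : IsWeight a b ω)
    (hφ : IntegrableOn φ (Icc a b)) : IntegrableOn (fun x => φ x * ω x) (Icc a b) :=
  have ⟨_, hC⟩ := hω.exists_ae_norm_le
  hφ.mul_bdd hω.1.aestronglyMeasurable hC

theorem Ia_congr_ae {x : ℝ} {k : ℝ → ℝ → ℝ} {f g : ℝ → ℝ}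
    (h : f =ᵐ[volume.restrict (Icc a b)] g) (hx : x ∈ Icc a b) :
    Ia a ω k f x = Ia a ω k g x := by
  refine intervalIntegral.integral_congr_ae ?_
  filter_upwards [(ae_restrict_iff' measurableSet_Icc).1 h] with y hy hyI
  rw [uIoc_of_le hx.1] at hyI
  rw [hy ⟨hyI.1.le, hyI.2.trans hx.2⟩]

theorem Ia_Ia_eq_integral_of_deltaK_eq_one {x : ℝ} {k k' : ℝ → ℝ → ℝ}
    (hω : Measurable ω) (hω_pos : ∀ y ∈ Icc a b, 0 < ω y)
    (hk : Measurable (uncurry k)) (hk_pos : ∀ x y, a ≤ y → y < x → x ≤ b → 0 < k x y)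
    (hk' : Measurable (uncurry k'))
    (hk'_pos : ∀ x y, a ≤ y → y < x → x ≤ b → 0 < k' x y)
    (hδ : ∀ x y, a ≤ y → y < x → x ≤ b → deltaK ω k' k x y = 1)
    (hφω : IntegrableOn (fun y => φ y * ω y) (Icc a b)) (hx : x ∈ Icc a b) :
    Ia a ω k' (Ia a ω k φ) x = ∫ y in a..x, φ y * ω y := by
  -- On `Ioo a x` both variables stay inside `Ω`, where the kernels are positive.
  set P : ℝ → ℝ → ℝ := fun y z => (Ioi z).indicator (fun y => k' x y * k y z * ω y) y
  have hP : Measurable (uncurry P) := by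
    refine Measurable.indicator ?_ (measurableSet_lt measurable_snd measurable_fst)
    exact ((hk'.comp (measurable_const.prodMk measurable_fst)).mul hk).mul
      (hω.comp measurable_fst)
  have hP_nonneg : ∀ᵐ z ∂volume.restrict (Ioo a x), ∀ᵐ y ∂volume.restrict (Ioo a x),
      0 ≤ P y z := by
    filter_upwards [ae_restrict_mem measurableSet_Ioo] with z hz
    filter_upwards [ae_restrict_mem measurableSet_Ioo] with y hy
    simp only [P, indicator_apply, mem_Ioi]
    split_ifs with hzy
    · have hay : a ≤ y := (hz.1.trans hzy).le
      have hyb : y ≤ b := hy.2.le.trans hx.2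
      exact (mul_pos (mul_pos (hk'_pos x y hay hy.2 hx.2) (hk_pos y z hz.1.le hzy hyb))
        (hω_pos y ⟨hay, hyb⟩)).le
    · exact le_rfl
  have hP_one : ∀ᵐ z ∂volume.restrict (Ioo a x), ∫ y in Ioo a x, P y z = 1 := by
    filter_upwards [ae_restrict_mem measurableSet_Ioo] with z hz
    rw [setIntegral_indicator measurableSet_Ioi, Ioo_inter_Ioi, max_eq_right hz.1.le,
      ← integral_Ioc_eq_integral_Ioo, ← intervalIntegral.integral_of_le hz.2.le]
    exact hδ x z hz.1.le hz.2 hx.2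
  have hsection : ∀ y ∈ Ioo a x,
      k' x y * Ia a ω k φ y * ω y = ∫ z in Ioo a x, P y z * (φ z * ω z) := by
    intro y hy
    have hP_section : ∀ z, P y z * (φ z * ω z) =
        (Iio y).indicator (fun z => k' x y * ω y * (k y z * φ z * ω z)) z := by
      intro z
      simp only [P, indicator_apply, mem_Ioi, mem_Iio]
      split_ifs <;> ring
    simp_rw [hP_section]
    rw [setIntegral_indicator measurableSet_Iio, Ioo_inter_Iio, min_eq_right hy.2.le,
      integral_const_mul, Ia, intervalIntegral.integral_of_le hy.1.le, integral_Ioc_eq_integral_Ioo]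
    ring
  rw [Ia, intervalIntegral.integral_of_le hx.1, intervalIntegral.integral_of_le hx.1,
    integral_Ioc_eq_integral_Ioo, integral_Ioc_eq_integral_Ioo,
    setIntegral_congr_fun measurableSet_Ioo hsection]
  exact integral_integral_mul_eq_integral_of_integral_eq_one hP.aestronglyMeasurable hP_nonneg
    hP_one (hφω.mono_set (Ioo_subset_Icc_self.trans (Icc_subset_Icc_right hx.2)))

theorem ae_inv_mul_deriv_integral_mul_eq (hω_pos : ∀ x ∈ Icc a b, 0 < ω x) (hab : a ≤ b)
    (hφω : IntegrableOn (fun y => φ y * ω y) (Icc a b)) :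
    ∀ᵐ x ∂volume.restrict (Icc a b),
      DifferentiableAt ℝ (fun t => ∫ y in a..t, φ y * ω y) x ∧
      (ω x)⁻¹ * deriv (fun t => ∫ y in a..t, φ y * ω y) x = φ x := by
  have hFTC :=
    ((intervalIntegrable_iff_integrableOn_Icc_of_le hab).2 hφω).ae_hasDerivAt_integral
  rw [uIcc_of_le hab] at hFTC
  filter_upwards [ae_restrict_of_ae hFTC, ae_restrict_mem measurableSet_Icc] with x hx hxI
  have hderiv := hx hxI a (left_mem_Icc.2 hab)
  refine ⟨hderiv.differentiableAt, ?_⟩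
  rw [hderiv.deriv, mul_comm, mul_assoc, mul_inv_cancel₀ (hω_pos x hxI).ne', mul_one]

end

theorem stmt10_general (a b : ℝ) (hab : a < b) (ω : ℝ → ℝ) (hω : IsWeight a b ω)
    (k k' : ℝ → ℝ → ℝ) (hk : MemK a b ω k) (hk' : MemK a b ω k')
    (hconj : Conjugate a b ω k k')
    (f φ : ℝ → ℝ) (hφ : IntegrableOn φ (Icc a b))
    (hrep : ∀ᵐ x ∂(volume.restrict (Icc a b)), f x = Ia a ω k φ x) :
    (∀ᵐ x ∂(volume.restrict (Icc a b)),
      Ia a ω k' f x = ∫ y in a..x, φ y * ω y) ∧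
    (∀ᵐ x ∂(volume.restrict (Icc a b)),
      DifferentiableAt ℝ (fun t => ∫ y in a..t, φ y * ω y) x ∧
      (ω x)⁻¹ * deriv (fun t => ∫ y in a..t, φ y * ω y) x = φ x) ∧
    (∀ᵐ x ∂(volume.restrict (Icc a b)),
      Ia a ω k (fun y => (ω y)⁻¹ * deriv (fun t => ∫ s in a..t, φ s * ω s) y) x = f x) := by
  have hφω := hω.integrableOn_mul hφ
  have hderiv := ae_inv_mul_deriv_integral_mul_eq hω.2.1 hab.le hφω
  refine ⟨?_, hderiv, ?_⟩
  · filter_upwards [ae_restrict_mem measurableSet_Icc] with x hx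
    rw [Ia_congr_ae hrep hx]
    exact Ia_Ia_eq_integral_of_deltaK_eq_one hω.1 hω.2.1 hk.1 hk.2.1 hk'.1 hk'.2.1
      (fun x y hy hyx hx => (hconj x y hy hyx hx).2) hφω hx
  · filter_upwards [hrep, ae_restrict_mem measurableSet_Icc] with x hfx hx
    rw [hfx]
    exact Ia_congr_ae (hderiv.mono fun _ h => h.2) hx

/-- if `k` and `k'` are conjugate and `f = I_a^k φ` a.e. with `φ ∈ L¹([a,b])`,
then `I_a^{k'} f` agrees a.e. with the absolutely continuous function
`Ψ(x) = ∫_a^x φ(y) ω(y) dy`, the `k'`-derivative `D_a^{k'} f = (1/ω) Ψ'` equals `φ` a.e.,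
and consequently `I_a^k (D_a^{k'} f) = f` a.e. on `[a,b]`. -/
theorem stmt10 (a b : ℝ) (hab : a < b) (ω : ℝ → ℝ) (hω : IsWeight a b ω)
    (k k' : ℝ → ℝ → ℝ) (hk : MemK a b ω k) (hk' : MemK a b ω k')
    (hconj : Conjugate a b ω k k')
    (f φ : ℝ → ℝ) (hf : IntegrableOn f (Icc a b)) (hφ : IntegrableOn φ (Icc a b))
    (hrep : ∀ᵐ x ∂(volume.restrict (Icc a b)), f x = Ia a ω k φ x) :
    (∀ᵐ x ∂(volume.restrict (Icc a b)),
      Ia a ω k' f x = ∫ y in a..x, φ y * ω y) ∧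
    (∀ᵐ x ∂(volume.restrict (Icc a b)),
      DifferentiableAt ℝ (fun t => ∫ y in a..t, φ y * ω y) x ∧
      (ω x)⁻¹ * deriv (fun t => ∫ y in a..t, φ y * ω y) x = φ x) ∧
    (∀ᵐ x ∂(volume.restrict (Icc a b)),
      Ia a ω k (fun y => (ω y)⁻¹ * deriv (fun t => ∫ s in a..t, φ s * ω s) y) x = f x) :=
  stmt10_general a b hab ω hω k k' hk hk' hconj f φ hφ hrep
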